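/- Let K be a finite index set, let C, C^R, C^I > 0, let d : K → ℂ with Re d_k ≥ 0, Im d_k ≥ 0, |d_k| ≤ C, Re d_k ≤ C^R and Im d_k ≤ C^I for every k ∈ K, and let v : K → ℝ with v_k > 0 for every k. Define OPT₁ as the maximum of Σ_{k∈S₁} v_k over all S₁ ⊆ K with Re(Σ_{k∈S₁} d_k) + Im(Σ_{k∈S₁} d_k) ≤ C, Re(Σ_{k∈S₁} d_k) ≤ C^R and Im(Σ_{k∈S₁} d_k) ≤ C^I; define V₂ as the maximum of v_k over all k ∈ K with Re d_k + Im d_k > C (with V₂ = 0 if no such k exists). Then for every S ⊆ K with |Σ_{k∈S} d_k| ≤ C, Re(Σ_{k∈S} d_k) ≤ C^R and Im(Σ_{k∈S} d_k) ≤ C^I, one has Σ_{k∈S} v_k ≤ 2 · max(OPT₁, V₂). -/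

import Mathlib

/-!
Put `g k = Re d_k + Im d_k`. Since `Re z + Im z ≤ √2 |z| < (3/2) |z|`, a feasible `S` has
`g(S) < (3/2) C`, and any part of `S` with `g ≤ C` is admissible for `OPT₁`. If `S` contains an
item with `g > C`, that item is worth at most `V₂` and the rest has `g < C/2`. Otherwise a
largest-`g` subset `T ⊆ S` with `g(T) ≤ C` leaves `g(S \ T) ≤ C`: an item of `S \ T` of positive
weight fits neither beside `T` nor outweighs `T`, so `g(T) > C/2`.
-/

open Finset

theorem Complex.re_add_im_le_sqrt_two_mul_norm (z : ℂ) : z.re + z.im ≤ √2 * ‖z‖ := by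
  rw [← Real.sqrt_sq (norm_nonneg z), ← Real.sqrt_mul zero_le_two]
  apply Real.le_sqrt_of_sq_le
  rw [Complex.sq_norm, Complex.normSq_apply]
  nlinarith [sq_nonneg (z.re - z.im)]

theorem Finset.exists_subset_sum_le_and_sum_sdiff_le {ι : Type*} [DecidableEq ι]
    (s : Finset ι) (w : ι → ℝ) {C : ℝ} (hC : 0 ≤ C) (hw : ∀ i ∈ s, w i ≤ C)
    (hs : ∑ i ∈ s, w i ≤ 3 / 2 * C) :
    ∃ t ⊆ s, ∑ i ∈ t, w i ≤ C ∧ ∑ i ∈ s \ t, w i ≤ C := by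
  obtain ⟨t, ht, hmax⟩ := (s.powerset.filter fun t => ∑ i ∈ t, w i ≤ C).exists_max_image
    (fun t => ∑ i ∈ t, w i) ⟨∅, by simpa using hC⟩
  rw [mem_filter, mem_powerset] at ht
  refine ⟨t, ht.1, ht.2, ?_⟩
  by_contra! hgt
  obtain ⟨k, hk, hk_pos⟩ : ∃ k ∈ s \ t, 0 < w k :=
    exists_lt_of_sum_lt (by simpa using hC.trans_lt hgt)
  rw [mem_sdiff] at hk
  have hk_le : w k ≤ ∑ i ∈ t, w i := by
    simpa using hmax {k} (by simpa [hk.1] using hw k hk.1)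
  have hk_over : C < ∑ i ∈ t, w i + w k := by
    by_contra! hle
    have := hmax (insert k t) (by
      rw [mem_filter, mem_powerset, sum_insert hk.2]
      exact ⟨insert_subset hk.1 ht.1, by linarith⟩)
    rw [sum_insert hk.2] at this
    linarith
  linarith [sum_sdiff ht.1 (f := w)]

theorem Set.bddAbove_setOf_exists_and_eq {α : Type*} [Finite α] (P : α → Prop) (f : α → ℝ) :
    BddAbove {x : ℝ | ∃ a, P a ∧ x = f a} :=
  ((Set.finite_range f).subset <| by rintro _ ⟨a, -, rfl⟩; exact ⟨a, rfl⟩).bddAbove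

theorem gckp_value_bound_general {K : Type*} [Fintype K] (C CR CI : ℝ)
    (hC : 0 < C)
    (d : K → ℂ) (hre : ∀ k, 0 ≤ (d k).re) (him : ∀ k, 0 ≤ (d k).im)
    (v : K → ℝ)
    (OPT₁ V₂ : ℝ)
    (hOPT₁ : OPT₁ = sSup {x : ℝ | ∃ S₁ : Finset K,
      ((∑ k ∈ S₁, d k).re + (∑ k ∈ S₁, d k).im ≤ C ∧
        (∑ k ∈ S₁, d k).re ≤ CR ∧ (∑ k ∈ S₁, d k).im ≤ CI) ∧
      x = ∑ k ∈ S₁, v k})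
    (hV₂ : V₂ = sSup (insert 0 {x : ℝ | ∃ k : K, C < (d k).re + (d k).im ∧ x = v k}))
    (S : Finset K) (hS : ‖∑ k ∈ S, d k‖ ≤ C)
    (hSR : (∑ k ∈ S, d k).re ≤ CR) (hSI : (∑ k ∈ S, d k).im ≤ CI) :
    ∑ k ∈ S, v k ≤ 2 * max OPT₁ V₂ := by
  classical
  set g : K → ℝ := fun k => (d k).re + (d k).im
  have hg_sum (T : Finset K) : ∑ k ∈ T, g k = (∑ k ∈ T, d k).re + (∑ k ∈ T, d k).im := by
    simp only [g, Complex.re_sum, Complex.im_sum, sum_add_distrib]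
  have hOPT (T : Finset K) (hTS : T ⊆ S) (hT : ∑ k ∈ T, g k ≤ C) : ∑ k ∈ T, v k ≤ OPT₁ := by
    refine hOPT₁ ▸ le_csSup (Set.bddAbove_setOf_exists_and_eq _ _) ⟨T, ⟨hg_sum T ▸ hT, ?_, ?_⟩, rfl⟩
    · refine le_trans ?_ hSR
      simpa only [Complex.re_sum] using sum_le_sum_of_subset_of_nonneg hTS fun k _ _ => hre k
    · refine le_trans ?_ hSI
      simpa only [Complex.im_sum] using sum_le_sum_of_subset_of_nonneg hTS fun k _ _ => him k
  have hS_total : ∑ k ∈ S, g k ≤ 3 / 2 * C := by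
    rw [hg_sum]
    nlinarith [(∑ k ∈ S, d k).re_add_im_le_sqrt_two_mul_norm, Real.sqrt_two_lt_three_halves,
      norm_nonneg (∑ k ∈ S, d k)]
  by_cases hheavy : ∃ k ∈ S, C < g k
  · obtain ⟨k, hkS, hk⟩ := hheavy
    have hvk : v k ≤ V₂ := hV₂ ▸ le_csSup ((Set.bddAbove_setOf_exists_and_eq _ _).insert 0)
      (Set.mem_insert_of_mem _ ⟨k, hk, rfl⟩)
    have hrest := hOPT (S.erase k) (erase_subset k S) (by linarith [sum_erase_add S g hkS])
    rw [← sum_erase_add S v hkS]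
    linarith [le_max_left OPT₁ V₂, le_max_right OPT₁ V₂]
  · push Not at hheavy
    obtain ⟨T, hTS, hT, hST⟩ := S.exists_subset_sum_le_and_sum_sdiff_le g hC.le hheavy hS_total
    rw [← sum_sdiff hTS]
    linarith [hOPT T hTS hT, hOPT (S \ T) sdiff_subset hST, le_max_left OPT₁ V₂]

/-- Combinatorial core of Theorem 5 (GC-KP): for any feasible GC-KP solution
`S`, its value is at most `2 · max(OPT₁, V₂)`, where `OPT₁` is the optimal
value over solutions whose demand sum lies in the polygonal region `D₁`, and
`V₂` is the best value of a single item whose demand satisfies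
`Re + Im > C` (zero if there is none). -/
theorem gckp_value_bound {K : Type*} [Fintype K] (C CR CI : ℝ)
    (hC : 0 < C) (hCR : 0 < CR) (hCI : 0 < CI)
    (d : K → ℂ) (hre : ∀ k, 0 ≤ (d k).re) (him : ∀ k, 0 ≤ (d k).im)
    (hmag : ∀ k, ‖d k‖ ≤ C)
    (hdR : ∀ k, (d k).re ≤ CR) (hdI : ∀ k, (d k).im ≤ CI)
    (v : K → ℝ) (hv : ∀ k, 0 < v k)
    (OPT₁ V₂ : ℝ)
    (hOPT₁ : OPT₁ = sSup {x : ℝ | ∃ S₁ : Finset K,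
      ((∑ k ∈ S₁, d k).re + (∑ k ∈ S₁, d k).im ≤ C ∧
        (∑ k ∈ S₁, d k).re ≤ CR ∧ (∑ k ∈ S₁, d k).im ≤ CI) ∧
      x = ∑ k ∈ S₁, v k})
    (hV₂ : V₂ = sSup (insert 0 {x : ℝ | ∃ k : K, C < (d k).re + (d k).im ∧ x = v k}))
    (S : Finset K) (hS : ‖∑ k ∈ S, d k‖ ≤ C)
    (hSR : (∑ k ∈ S, d k).re ≤ CR) (hSI : (∑ k ∈ S, d k).im ≤ CI) :
    ∑ k ∈ S, v k ≤ 2 * max OPT₁ V₂ :=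
  gckp_value_bound_general C CR CI hC d hre him v OPT₁ V₂ hOPT₁ hV₂ S hS hSR hSI
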